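/- For all integers n, m ≥ 1, the domination polynomial of the n×m rook graph satisfies D_{R_{n,m}}(x) = ((1+x)^n − 1)^m + ((1+x)^m − 1)^n − (−1)^n Σ_{ℓ=0}^{n} (−1)^ℓ C(n,ℓ) ((1+x)^ℓ − 1)^m as an identity in the polynomial ring ℤ[x]. -/

import Mathlib

open Finset Polynomial

/-- The `n × m` rook graph: vertices are squares `(a,b)`; two distinct squares are
adjacent iff they share a row or a column. -/
def rookGraph (n m : ℕ) : SimpleGraph (Fin n × Fin m) where
  Adj v w := v ≠ w ∧ (v.1 = w.1 ∨ v.2 = w.2)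
  symm := by
    constructor
    rintro v w ⟨h1, h2⟩
    exact ⟨h1.symm, h2.imp Eq.symm Eq.symm⟩
  loopless := by
    constructor
    rintro v ⟨h1, _⟩
    exact h1 rfl

/-- `S` is a dominating set of the `n × m` rook graph. -/
def IsDomSet (n m : ℕ) (S : Finset (Fin n × Fin m)) : Prop :=
  ∀ v, v ∈ S ∨ ∃ u ∈ S, (rookGraph n m).Adj u v

/-- `domCount n m k` is the number of dominating sets of cardinality `k`
of the `n × m` rook graph. -/
noncomputable def domCount (n m k : ℕ) : ℕ :=
  Set.ncard {S : Finset (Fin n × Fin m) | S.card = k ∧ IsDomSet n m S}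

/-- `ECount n m k` is the number of `k`-element subsets of `{1,…,n} × {1,…,m}`
that meet every row and every column. -/
noncomputable def ECount (n m k : ℕ) : ℕ :=
  Set.ncard {T : Finset (Fin n × Fin m) | T.card = k ∧
    (∀ r : Fin n, ∃ c : Fin m, (r, c) ∈ T) ∧ (∀ c : Fin m, ∃ r : Fin n, (r, c) ∈ T)}

/-- The domination polynomial of the `n × m` rook graph, as a polynomial over `ℤ`. -/
noncomputable def domPoly (n m : ℕ) : Polynomial ℤ :=
  ∑ k ∈ Finset.range (n * m + 1), Polynomial.C (domCount n m k : ℤ) * Polynomial.X ^ k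

/-! A set of squares dominates the rook graph iff it meets every row or every column, so the
domination polynomial is `A + B - E`, where `A`, `B`, `E` sum `x ^ #S` over the sets meeting
every row, every column, and both. Cutting a set into its columns, a set inside `L × β` meeting
every column is an independent choice of a nonempty subset of `L` in each column, which gives
`((1 + x) ^ #L - 1) ^ Fintype.card β`; this yields `A` and `B`, and `E` follows by
inclusion–exclusion over the set of rows that are missed. -/

lemma Finset.sum_filter_or {ι M : Type*} [DecidableEq ι] [AddCommGroup M] (s : Finset ι)
    (p q : ι → Prop) [DecidablePred p] [DecidablePred q] (f : ι → M) :
    ∑ i ∈ s with p i ∨ q i, f i =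
      ∑ i ∈ s with p i, f i + ∑ i ∈ s with q i, f i - ∑ i ∈ s with p i ∧ q i, f i := by
  rw [filter_or, filter_and, eq_sub_iff_add_eq, sum_union_inter]

lemma Finset.sum_filter_pow_card {γ R : Type*} [Fintype γ] [CommSemiring R]
    (P : Finset γ → Prop) [DecidablePred P] (x : R) :
    ∑ S : Finset γ with P S, x ^ #S =
      ∑ k ∈ range (Fintype.card γ + 1), (#{S : Finset γ | #S = k ∧ P S} : R) * x ^ k := by
  rw [← sum_fiberwise_of_maps_to (g := card) (t := range (Fintype.card γ + 1))
    fun S _ => mem_range_succ_iff.2 (card_le_univ S)]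
  refine sum_congr rfl fun k _ => ?_
  rw [filter_filter, ← nsmul_eq_mul, ← sum_const]
  exact sum_congr (by simp only [and_comm]) fun S hS => by rw [(mem_filter.1 hS).2.1]

section

variable {α β R : Type*} [Fintype α] [Fintype β] [DecidableEq α] [DecidableEq β] [CommRing R]

def finsetProdEquivColumns : Finset (α × β) ≃ (β → Finset α) where
  toFun S b := {a | (a, b) ∈ S}
  invFun f := {p | p.1 ∈ f p.2}
  left_inv S := by ext; simp
  right_inv f := by ext; simp

@[simp]
lemma mem_finsetProdEquivColumns {S : Finset (α × β)} {a : α} {b : β} :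
    a ∈ finsetProdEquivColumns S b ↔ (a, b) ∈ S := by
  simp [finsetProdEquivColumns]

lemma card_eq_sum_card_finsetProdEquivColumns (S : Finset (α × β)) :
    #S = ∑ b, #(finsetProdEquivColumns S b) := by
  rw [card_eq_sum_card_fiberwise (f := Prod.snd) (t := univ) (fun _ _ => mem_univ _)]
  refine sum_congr rfl fun b _ => card_nbij' Prod.fst (·, b) ?_ ?_ ?_ ?_ <;>
    intro p <;> aesop

lemma sum_prod_finsetProdEquivColumns {M : Type*} [CommSemiring M] (g : β → Finset α → M) :
    ∑ S : Finset (α × β), ∏ b, g b (finsetProdEquivColumns S b) = ∏ b, ∑ T, g b T := by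
  rw [Fintype.prod_sum]
  exact Fintype.sum_equiv finsetProdEquivColumns _ _ fun _ => rfl

lemma sum_nonempty_subset_pow_card (L : Finset α) (x : R) :
    ∑ T : Finset α with T.Nonempty ∧ T ⊆ L, x ^ #T = (1 + x) ^ #L - 1 := by
  have h := sum_pow_mul_eq_add_pow x 1 L
  simp only [one_pow, mul_one, add_comm x] at h
  rw [← h, ← sum_erase_add _ _ (empty_mem_powerset L), card_empty, pow_zero, add_sub_cancel_right]
  congr 1
  ext T
  simp [nonempty_iff_ne_empty]

lemma sum_pow_card_of_subset_prod_univ (L : Finset α) (x : R) :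
    ∑ S ∈ (L ×ˢ (univ : Finset β)).powerset with S.image Prod.snd = univ, x ^ #S =
      ((1 + x) ^ #L - 1) ^ Fintype.card β := by
  have hterm (S : Finset (α × β)) :
      (if S ∈ (L ×ˢ univ).powerset then if S.image Prod.snd = univ then x ^ #S else 0 else 0) =
        ∏ b, if (finsetProdEquivColumns S b).Nonempty ∧ finsetProdEquivColumns S b ⊆ L then
          x ^ #(finsetProdEquivColumns S b) else 0 := by
    have hcover : (S ⊆ L ×ˢ univ ∧ S.image Prod.snd = univ) ↔
        ∀ b ∈ univ, (finsetProdEquivColumns S b).Nonempty ∧ finsetProdEquivColumns S b ⊆ L := by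
      simp only [Finset.Nonempty, subset_iff, mem_finsetProdEquivColumns, mem_product, mem_univ,
        and_true, true_implies, eq_univ_iff_forall, mem_image, Prod.exists, exists_eq_right]
      exact ⟨fun ⟨h₁, h₂⟩ b => ⟨h₂ b, fun a ha => h₁ ha⟩,
        fun h => ⟨fun p hp => (h p.2).2 hp, fun b => (h b).1⟩⟩
    rw [prod_ite_zero, prod_pow_eq_pow_sum, ← card_eq_sum_card_finsetProdEquivColumns]
    simp only [mem_powerset, ← ite_and]
    congr 1
    exact propext hcover
  rw [sum_filter, ← univ_inter (L ×ˢ univ).powerset, ← sum_ite_mem,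
    sum_congr rfl fun S _ => hterm S,
    sum_prod_finsetProdEquivColumns fun _ T => if T.Nonempty ∧ T ⊆ L then x ^ #T else 0,
    ← sum_filter, sum_nonempty_subset_pow_card, prod_const, card_univ]

lemma sum_pow_card_of_image_snd_eq_univ (x : R) :
    ∑ S : Finset (α × β) with S.image Prod.snd = univ, x ^ #S =
      ((1 + x) ^ Fintype.card α - 1) ^ Fintype.card β := by
  rw [← card_univ, ← sum_pow_card_of_subset_prod_univ, univ_product_univ, powerset_univ]

lemma sum_pow_card_of_image_fst_eq_univ (x : R) :
    ∑ S : Finset (α × β) with S.image Prod.fst = univ, x ^ #S =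
      ((1 + x) ^ Fintype.card β - 1) ^ Fintype.card α := by
  rw [← sum_pow_card_of_image_snd_eq_univ, sum_filter, sum_filter]
  exact Fintype.sum_equiv (Equiv.prodComm α β).finsetCongr _ _ fun S => by
    simp [Equiv.finsetCongr_apply, map_eq_image, image_image, Function.comp_def,
      card_image_of_injective _ Prod.swap_injective]

/-- Inclusion–exclusion over the set `t` of rows that `S` misses. -/
lemma sum_pow_card_of_image_fst_eq_univ_of_image_snd_eq_univ (x : R) :
    ∑ S : Finset (α × β) with S.image Prod.fst = univ ∧ S.image Prod.snd = univ, x ^ #S =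
      ∑ t : Finset α, (-1) ^ #t * ((1 + x) ^ #tᶜ - 1) ^ Fintype.card β := by
  set avoiding : α → Finset (Finset (α × β)) := fun a => {S | ∀ b, (a, b) ∉ S}
  have hcover : ({S | S.image Prod.fst = univ} : Finset (Finset (α × β))) =
      univ.inf fun a => (avoiding a)ᶜ := by
    ext S
    simp [avoiding, mem_inf, eq_univ_iff_forall]
  have havoid (t : Finset α) : t.inf avoiding = (tᶜ ×ˢ univ).powerset := by
    ext S
    simp only [avoiding, mem_inf, mem_filter, mem_univ, true_and, mem_powerset, subset_iff,
      mem_product, mem_compl, and_true]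
    exact ⟨fun h p hp hpt => h _ hpt p.2 hp, fun h a hat b hab => h hab hat⟩
  rw [← filter_filter, sum_filter, hcover, inclusion_exclusion_sum_inf_compl]
  refine sum_congr rfl fun t _ => ?_
  rw [havoid, ← sum_filter, sum_pow_card_of_subset_prod_univ, zsmul_eq_mul]
  push_cast
  rfl

lemma sum_neg_one_pow_card_mul_card_compl (h : ℕ → R) :
    ∑ t : Finset α, (-1) ^ #t * h #tᶜ =
      (-1) ^ Fintype.card α *
        ∑ l ∈ range (Fintype.card α + 1), (-1) ^ l * ((Fintype.card α).choose l : R) * h l := by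
  have hsign (t : Finset α) : ((-1 : R) ^ #tᶜ) = (-1) ^ Fintype.card α * (-1) ^ #t := by
    rw [← card_compl_add_card t, pow_add, mul_assoc, ← pow_add, Even.neg_one_pow ⟨_, rfl⟩, mul_one]
  calc ∑ t : Finset α, (-1) ^ #t * h #tᶜ = ∑ t : Finset α, (-1) ^ #tᶜ * h #t :=
        Fintype.sum_equiv (compl_involutive.toPerm _) _ _ fun t => by simp
    _ = (-1) ^ Fintype.card α * ∑ t ∈ (univ : Finset α).powerset, (-1) ^ #t * h #t := by
        simp only [hsign, mul_assoc, powerset_univ, mul_sum]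
    _ = _ := by
        rw [sum_powerset_apply_card fun l => (-1 : R) ^ l * h l, card_univ]
        congr 1
        exact sum_congr rfl fun l _ => by rw [nsmul_eq_mul]; ring

end

lemma isDomSet_iff {n m : ℕ} {S : Finset (Fin n × Fin m)} :
    IsDomSet n m S ↔ S.image Prod.fst = univ ∨ S.image Prod.snd = univ := by
  simp only [eq_univ_iff_forall, mem_image, Prod.exists, exists_and_right, exists_eq_right]
  refine ⟨fun hS => ?_, ?_⟩
  · -- a square on an empty row and an empty column is not dominated
    by_contra! ⟨⟨r, hr⟩, ⟨c, hc⟩⟩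
    obtain hrc | ⟨u, hu, -, hur | huc⟩ := hS (r, c)
    · exact hr c hrc
    · obtain rfl : u.1 = r := hur
      exact hr u.2 hu
    · obtain rfl : u.2 = c := huc
      exact hc u.1 hu
  · rintro (hrows | hcols) ⟨r, c⟩
    · obtain ⟨c', hc'⟩ := hrows r
      obtain rfl | hne := eq_or_ne c' c
      · exact Or.inl hc'
      · exact Or.inr ⟨(r, c'), hc', by simp [hne], Or.inl rfl⟩
    · obtain ⟨r', hr'⟩ := hcols c
      obtain rfl | hne := eq_or_ne r' r
      · exact Or.inl hr'
      · exact Or.inr ⟨(r', c), hr', by simp [hne], Or.inr rfl⟩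

lemma domPoly_eq_sum (n m : ℕ) :
    domPoly n m = ∑ S : Finset (Fin n × Fin m) with
      S.image Prod.fst = univ ∨ S.image Prod.snd = univ, Polynomial.X ^ #S := by
  rw [sum_filter_pow_card, Fintype.card_prod, Fintype.card_fin, Fintype.card_fin, domPoly]
  refine sum_congr rfl fun k _ => ?_
  rw [domCount, Polynomial.C_eq_natCast, ← Set.ncard_coe_finset, coe_filter_univ]
  simp only [isDomSet_iff]

theorem rook_domination_polynomial_form12_general (n m : ℕ) :
    domPoly n m =
      ((1 + Polynomial.X) ^ n - 1) ^ m + ((1 + Polynomial.X) ^ m - 1) ^ n -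
        (-1 : Polynomial ℤ) ^ n *
          ∑ l ∈ Finset.range (n + 1),
            (-1 : Polynomial ℤ) ^ l * Polynomial.C (n.choose l : ℤ) *
              ((1 + Polynomial.X) ^ l - 1) ^ m := by
  rw [domPoly_eq_sum, sum_filter_or, sum_pow_card_of_image_fst_eq_univ,
    sum_pow_card_of_image_snd_eq_univ, sum_pow_card_of_image_fst_eq_univ_of_image_snd_eq_univ,
    sum_neg_one_pow_card_mul_card_compl fun l =>
      ((1 + Polynomial.X) ^ l - 1) ^ Fintype.card (Fin m)]
  simp only [Fintype.card_fin, Polynomial.C_eq_natCast]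
  ring

/-- Intermediate form (eq. (12) in the paper) of the domination polynomial. -/
theorem rook_domination_polynomial_form12 (n m : ℕ) (hn : 1 ≤ n) (hm : 1 ≤ m) :
    domPoly n m =
      ((1 + Polynomial.X) ^ n - 1) ^ m + ((1 + Polynomial.X) ^ m - 1) ^ n -
        (-1 : Polynomial ℤ) ^ n *
          ∑ l ∈ Finset.range (n + 1),
            (-1 : Polynomial ℤ) ^ l * Polynomial.C (n.choose l : ℤ) *
              ((1 + Polynomial.X) ^ l - 1) ^ m :=
  rook_domination_polynomial_form12_general n m
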